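/- Let d ≥ 1, let k ≥ 1 be an integer, and let K : ℝ^d × ℝ^d → ℂ satisfy the uniform quantitative positivity condition for balls. Let b ∈ L^k_loc(ℝ^d;ℝ) be such that (x,y) ↦ |b(x) − b(y)|^k·|K(x,y)| is integrable on B̃ × B for all balls B, B̃ of equal radius r with dist(B,B̃) ≥ r. Let 1 < p ≤ q < ∞, set α := (d/k)(1/p − 1/q), and suppose that for some Θ ≥ 0 the bound |∬ (b(x) − b(y))^k K(x,y) f(y) g(x) dy dx| ≤ Θ·‖f‖_∞·|B|^{1/p}·‖g‖_∞·|B̃|^{1/q'} (1/q' = 1 − 1/q) holds whenever f ∈ L^∞(B) and g ∈ L^∞(B̃) for balls B, B̃ of equal radius r with dist(B,B̃) ≥ r. Then there is a constant C depending only on d, p, q, k and the positivity constants such that: if α = 0 then (sup over balls B of ⨍_B |b − ⨍_B b|)^k ≤ C·Θ; if 0 < α ≤ 1 then b agrees a.e. with a function satisfying |b(x) − b(y)|^k ≤ C·Θ·|x − y|^{αk} for all x, y; and if α > 1 then b is a.e. constant. -/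

import Mathlib

open MeasureTheory Metric Filter

/-- `K` satisfies the uniform quantitative positivity condition for balls, with constants
`c1 > 0`, `C1 ≥ 3`: for every ball `B = B(y₀,r)` there is a ball `B̃ = B(x₀,r)` with
`r ≤ dist(B,B̃) ≤ C1·r` (equivalently `3r ≤ dist(x₀,y₀) ≤ (C1+2)r`) and a unimodular `σ`
with `Re(σK(x,y)) ≥ c1/|B|` on `B̃ × B`. -/
def UnifQuantPositivityBalls (d : ℕ)
    (K : EuclideanSpace ℝ (Fin d) → EuclideanSpace ℝ (Fin d) → ℂ) (c1 C1 : ℝ) : Prop :=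
  ∀ (y0 : EuclideanSpace ℝ (Fin d)) (r : ℝ), 0 < r →
    ∃ (x0 : EuclideanSpace ℝ (Fin d)) (σ : ℂ), ‖σ‖ = 1 ∧
      3 * r ≤ dist x0 y0 ∧ dist x0 y0 ≤ (C1 + 2) * r ∧
      ∀ x ∈ ball x0 r, ∀ y ∈ ball y0 r,
        c1 / (volume (ball y0 r)).toReal ≤ (σ * K x y).re

/-!
Testing the weak bound with `f = ε 1_T` and `g = σ 1_S`, where `B̃` is the ball given by the
positivity condition for `B = B(z, ρ)`, and splitting `B` at a median `m` of `b` on `B̃`, gives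
`⨍_B |b - m| ^ k ≲ Θ |B| ^ (1/p - 1/q) ≈ Θ ρ ^ (α k)`. By Jensen's inequality `b` then satisfies
Campanato's condition `⨍_B |b - m_B| ≲ ρ ^ α`. For `α = 0` this is the BMO bound. For `α > 0` the
averages of `b` over dyadically shrinking balls converge geometrically to a Hölder continuous
representative; when `α > 1` its derivative vanishes everywhere, so it is constant.
-/

open Set
open scoped ENNReal Topology

section Averages

variable {X : Type*} [MeasurableSpace X] {μ : Measure X} {s t : Set X} {f : X → ℝ}

lemma abs_setAverage_sub_le (hs0 : μ s ≠ 0) (hs : μ s ≠ ∞) (hf : IntegrableOn f s μ) (c : ℝ) :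
    |⨍ x in s, f x ∂μ - c| ≤ ⨍ x in s, |f x - c| ∂μ := by
  have hpos : μ.real s ≠ 0 := (ENNReal.toReal_pos hs0 hs).ne'
  have : ⨍ x in s, f x ∂μ - c = ⨍ x in s, (f x - c) ∂μ := by
    rw [setAverage_eq, setAverage_eq, integral_sub hf (integrableOn_const hs), setIntegral_const,
      smul_sub, smul_smul, inv_mul_cancel₀ hpos, one_smul]
  rw [this]
  exact norm_integral_le_integral_norm (μ := ((μ.restrict s) univ)⁻¹ • μ.restrict s)
    (fun x => f x - c)

lemma setAverage_nonneg (hf : ∀ x, 0 ≤ f x) : 0 ≤ ⨍ x in s, f x ∂μ :=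
  integral_nonneg hf

lemma setAverage_abs_sub_setAverage_le (hs0 : μ s ≠ 0) (hs : μ s ≠ ∞) (hf : IntegrableOn f s μ)
    (c : ℝ) : ⨍ x in s, |f x - ⨍ y in s, f y ∂μ| ∂μ ≤ 2 * ⨍ x in s, |f x - c| ∂μ := by
  set a := ⨍ y in s, f y ∂μ
  have hpos : 0 < μ.real s := ENNReal.toReal_pos hs0 hs
  have hfc : IntegrableOn (fun x => |f x - c|) s μ := (hf.sub (integrableOn_const hs)).abs
  have hfa : IntegrableOn (fun x => |f x - a|) s μ := (hf.sub (integrableOn_const hs)).abs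
  have hac : |a - c| ≤ (μ.real s)⁻¹ * ∫ x in s, |f x - c| ∂μ :=
    (abs_setAverage_sub_le hs0 hs hf c).trans_eq (by rw [setAverage_eq, smul_eq_mul])
  rw [setAverage_eq, setAverage_eq, smul_eq_mul, smul_eq_mul]
  calc (μ.real s)⁻¹ * ∫ x in s, |f x - a| ∂μ
      ≤ (μ.real s)⁻¹ * ∫ x in s, (|f x - c| + |a - c|) ∂μ := by
        refine mul_le_mul_of_nonneg_left (setIntegral_mono hfa (hfc.add (integrableOn_const hs))
          fun x => ?_) (by positivity)
        simpa only [abs_sub_comm c a] using abs_sub_le (f x) c a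
    _ = (μ.real s)⁻¹ * ∫ x in s, |f x - c| ∂μ + |a - c| := by
        rw [integral_add hfc (integrableOn_const hs), setIntegral_const, smul_eq_mul, mul_add,
          inv_mul_cancel_left₀ hpos.ne']
    _ ≤ 2 * ((μ.real s)⁻¹ * ∫ x in s, |f x - c| ∂μ) := by linarith

lemma setAverage_le_mul_setAverage_of_subset (hst : s ⊆ t) (hs0 : μ s ≠ 0) (ht : μ t ≠ ∞)
    (hf0 : ∀ x, 0 ≤ f x) (hf : IntegrableOn f t μ) :
    ⨍ x in s, f x ∂μ ≤ μ.real t / μ.real s * ⨍ x in t, f x ∂μ := by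
  have hs : μ s ≠ ∞ := ne_top_of_le_ne_top ht (measure_mono hst)
  have hs0' : 0 < μ.real s := ENNReal.toReal_pos hs0 hs
  have ht0' : 0 < μ.real t := ENNReal.toReal_pos (fun h => hs0 (measure_mono_null hst h)) ht
  rw [setAverage_eq, setAverage_eq, smul_eq_mul, smul_eq_mul, div_mul_eq_mul_div,
    mul_inv_cancel_left₀ ht0'.ne', le_div_iff₀ hs0', inv_mul_eq_div, div_mul_cancel₀ _ hs0'.ne']
  exact setIntegral_mono_set hf (Eventually.of_forall hf0) hst.eventuallyLE

lemma pow_setAverage_le_setAverage_pow (hs0 : μ s ≠ 0) (hs : μ s ≠ ∞) (hf0 : ∀ x, 0 ≤ f x)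
    (hf : IntegrableOn f s μ) (k : ℕ) (hfk : IntegrableOn (fun x => f x ^ k) s μ) :
    (⨍ x in s, f x ∂μ) ^ k ≤ ⨍ x in s, f x ^ k ∂μ :=
  (convexOn_pow k).map_set_average_le (continuousOn_pow k) isClosed_Ici hs0 hs
    (Eventually.of_forall fun x => hf0 x) hf hfk

end Averages

section LocalIntegrability

variable {X : Type*} [MeasurableSpace X] [TopologicalSpace X] {μ : Measure X}
  [IsLocallyFiniteMeasure μ] {b : X → ℝ} {k : ℕ}

namespace MeasureTheory.LocallyIntegrable

lemma abs_sub_const_pow (hbk : LocallyIntegrable (fun x => |b x| ^ k) μ)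
    (hb : AEStronglyMeasurable b μ) (c : ℝ) : LocallyIntegrable (fun x => |b x - c| ^ k) μ := by
  refine ((hbk.add (locallyIntegrable_const (|c| ^ k))).smul (2 ^ (k - 1) : ℝ)).mono
    ((hb.sub aestronglyMeasurable_const).norm.pow k) (Eventually.of_forall fun x => ?_)
  simp only [Pi.smul_apply, Pi.add_apply, smul_eq_mul]
  rw [Real.norm_of_nonneg (by positivity), Real.norm_of_nonneg (by positivity)]
  calc |b x - c| ^ k ≤ (|b x| + |c|) ^ k := pow_le_pow_left₀ (abs_nonneg _) (abs_sub _ _) k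
    _ ≤ _ := add_pow_le (abs_nonneg _) (abs_nonneg _) k

lemma of_abs_pow (hk : 1 ≤ k) (hbk : LocallyIntegrable (fun x => |b x| ^ k) μ)
    (hb : AEStronglyMeasurable b μ) : LocallyIntegrable b μ := by
  refine ((locallyIntegrable_const 1).add hbk).mono hb (Eventually.of_forall fun x => ?_)
  rw [Real.norm_eq_abs, Pi.add_apply, Real.norm_of_nonneg (by positivity)]
  rcases le_total |b x| 1 with h | h
  · linarith [pow_nonneg (abs_nonneg (b x)) k]
  · linarith [le_self_pow₀ h (by omega : k ≠ 0)]

lemma integrableOn_ball {Y : Type*} [PseudoMetricSpace Y]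
    [ProperSpace Y] [MeasurableSpace Y] {ν : Measure Y} {f : Y → ℝ} (hf : LocallyIntegrable f ν)
    (x : Y) (r : ℝ) : IntegrableOn f (ball x r) ν :=
  (hf.integrableOn_isCompact (isCompact_closedBall x r)).mono_set ball_subset_closedBall

end MeasureTheory.LocallyIntegrable

end LocalIntegrability

section Median

variable {X : Type*} [MeasurableSpace X] {μ : Measure X} {a c : ℝ≥0∞}

lemma mul_measure_iUnion_le {s : ℕ → Set X} (hs : Monotone s) (h : ∀ n, a * μ (s n) ≤ c) :
    a * μ (⋃ n, s n) ≤ c := by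
  rw [hs.measure_iUnion, ENNReal.mul_iSup]
  exact iSup_le h

lemma le_mul_measure_iInter [IsFiniteMeasure μ] (ha0 : a ≠ 0) (ha : a ≠ ∞) {s : ℕ → Set X}
    (hs : Antitone s) (hsm : ∀ n, MeasurableSet (s n)) (h : ∀ n, c ≤ a * μ (s n)) :
    c ≤ a * μ (⋂ n, s n) := by
  rw [hs.measure_iInter (fun n => (hsm n).nullMeasurableSet) ⟨0, measure_ne_top μ _⟩,
    ENNReal.mul_iInf_of_ne ha0 ha]
  exact le_iInf h

variable {f : X → ℝ}

/-- A median of `f` is the supremum of these levels. -/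
def lowerHalfLevels (μ : Measure X) (f : X → ℝ) : Set ℝ :=
  {t | 2 * μ {x | f x < t} ≤ μ univ}

lemma lowerHalfLevels_mem_of_le {t t' : ℝ} (ht : t ∈ lowerHalfLevels μ f) (ht' : t' ≤ t) :
    t' ∈ lowerHalfLevels μ f :=
  le_trans (mul_le_mul_right (measure_mono fun x (hx : f x < t') => hx.trans_le ht') 2) ht

lemma lowerHalfLevels_nonempty [IsFiniteMeasure μ] (hf : Measurable f) (hμ : μ univ ≠ 0) :
    (lowerHalfLevels μ f).Nonempty := by
  by_contra! hL
  have h := le_mul_measure_iInter (μ := μ) (c := μ univ) two_ne_zero ENNReal.ofNat_ne_top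
    (s := fun n : ℕ => {x | f x < -n})
    (fun n n' h x (hx : f x < -n') => hx.trans_le (by simpa using h))
    (fun n => hf measurableSet_Iio) (fun n => (not_le.1 fun hn => hL.subset hn).le)
  have : (⋂ n : ℕ, {x | f x < -n}) = ∅ :=
    eq_empty_of_forall_notMem fun x hx => by
      obtain ⟨n, hn⟩ := exists_nat_ge (-f x)
      have hxn : f x < -n := mem_iInter.1 hx n
      linarith
  rw [this, measure_empty, mul_zero, nonpos_iff_eq_zero] at h
  exact hμ h

lemma bddAbove_lowerHalfLevels [IsFiniteMeasure μ] (hμ : μ univ ≠ 0) :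
    BddAbove (lowerHalfLevels μ f) := by
  by_contra hL
  have h := mul_measure_iUnion_le (μ := μ) (s := fun n : ℕ => {x | f x < n})
    (fun n n' h x (hx : f x < n) => hx.trans_le (by simpa using h))
    (fun n => by
      obtain ⟨t, ht, hnt⟩ := not_bddAbove_iff.1 hL n
      exact lowerHalfLevels_mem_of_le ht hnt.le)
  have : (⋃ n : ℕ, {x | f x < n}) = univ :=
    eq_univ_of_forall fun x => mem_iUnion.2 (exists_nat_gt (f x))
  rw [this, two_mul] at h
  have h' : μ univ + μ univ ≤ μ univ + 0 := by rwa [add_zero]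
  rw [ENNReal.add_le_add_iff_left (measure_ne_top μ univ)] at h'
  exact hμ (le_antisymm h' bot_le)

lemma two_mul_measure_lt_sSup_lowerHalfLevels_le [IsFiniteMeasure μ] (hf : Measurable f)
    (hμ : μ univ ≠ 0) : 2 * μ {x | f x < sSup (lowerHalfLevels μ f)} ≤ μ univ := by
  set m := sSup (lowerHalfLevels μ f)
  have : {x | f x < m} = ⋃ n : ℕ, {x | f x < m - 1 / (n + 1)} := by
    ext x
    refine ⟨fun hx => ?_, fun hx => ?_⟩
    · obtain ⟨n, hn⟩ := exists_nat_one_div_lt (sub_pos.2 (show f x < m from hx))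
      exact mem_iUnion.2 ⟨n, show f x < m - 1 / (n + 1) by linarith⟩
    · obtain ⟨n, hn⟩ := mem_iUnion.1 hx
      exact (show f x < m - 1 / (n + 1) from hn).trans (sub_lt_self m Nat.one_div_pos_of_nat)
  rw [this]
  refine mul_measure_iUnion_le (fun n n' h x (hx : f x < _) => ?_) fun n => ?_
  · exact hx.trans_le (sub_le_sub_left (Nat.one_div_le_one_div h) m)
  · obtain ⟨t, ht, hlt⟩ := exists_lt_of_lt_csSup (lowerHalfLevels_nonempty hf hμ)
      (sub_lt_self m Nat.one_div_pos_of_nat)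
    exact lowerHalfLevels_mem_of_le ht hlt.le

lemma le_two_mul_measure_le_sSup_lowerHalfLevels [IsFiniteMeasure μ] (hf : Measurable f)
    (hμ : μ univ ≠ 0) : μ univ ≤ 2 * μ {x | f x ≤ sSup (lowerHalfLevels μ f)} := by
  set m := sSup (lowerHalfLevels μ f)
  have : {x | f x ≤ m} = ⋂ n : ℕ, {x | f x < m + 1 / (n + 1)} := by
    ext x
    refine ⟨fun hx => mem_iInter.2 fun n => ?_,
      fun hx => show f x ≤ m from le_of_forall_pos_lt_add fun ε hε => ?_⟩
    · exact (show f x ≤ m from hx).trans_lt (lt_add_of_pos_right m Nat.one_div_pos_of_nat)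
    · obtain ⟨n, hn⟩ := exists_nat_one_div_lt hε
      have hxn : f x < m + 1 / (n + 1) := mem_iInter.1 hx n
      linarith
  rw [this]
  refine le_mul_measure_iInter two_ne_zero ENNReal.ofNat_ne_top
    (fun n n' h x (hx : f x < _) => ?_) (fun n => hf measurableSet_Iio)
    fun n => (not_le.1 fun hn => ?_).le
  · exact hx.trans_le (add_le_add_right (Nat.one_div_le_one_div h) m)
  · exact (lt_add_of_pos_right m Nat.one_div_pos_of_nat).not_ge
      (le_csSup (bddAbove_lowerHalfLevels hμ) hn)

lemma exists_median [IsFiniteMeasure μ] (hf : Measurable f) :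
    ∃ m, μ univ ≤ 2 * μ {x | m ≤ f x} ∧ μ univ ≤ 2 * μ {x | f x ≤ m} := by
  rcases eq_or_ne (μ univ) 0 with hμ | hμ
  · exact ⟨0, by simp [hμ], by simp [hμ]⟩
  set m := sSup (lowerHalfLevels μ f)
  refine ⟨m, ?_, le_two_mul_measure_le_sSup_lowerHalfLevels hf hμ⟩
  have hcompl : {x | m ≤ f x} = {x | f x < m}ᶜ := by ext x; simp
  rw [hcompl, measure_compl (measurableSet_lt hf measurable_const) (measure_ne_top μ _),
    ENNReal.mul_sub fun _ _ => ENNReal.ofNat_ne_top]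
  calc μ univ = 2 * μ univ - μ univ := by
        rw [two_mul, ENNReal.add_sub_cancel_right (measure_ne_top μ univ)]
    _ ≤ 2 * μ univ - 2 * μ {x | f x < m} :=
        tsub_le_tsub_left (two_mul_measure_lt_sSup_lowerHalfLevels_le hf hμ) _

end Median

lemma eq_of_abs_sub_le_mul_dist_rpow {E : Type*} [NormedAddCommGroup E] [NormedSpace ℝ E]
    {f : E → ℝ} {C α : ℝ} (hα : 1 < α) (hf : ∀ x y, |f x - f y| ≤ C * dist x y ^ α) (x y : E) :
    f x = f y := by
  have hderiv (x : E) : HasFDerivAt f (0 : E →L[ℝ] ℝ) x := by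
    rw [hasFDerivAt_iff_isLittleO_nhds_zero]
    refine Asymptotics.IsLittleO.of_bound fun c hc => ?_
    have hlim : Tendsto (fun h : E => C * ‖h‖ ^ (α - 1)) (𝓝 0) (𝓝 0) := by
      simpa [Real.zero_rpow (sub_pos.2 hα).ne'] using
        (tendsto_norm_zero.rpow_const (Or.inr (sub_pos.2 hα).le)).const_mul C
    filter_upwards [hlim.eventually (ge_mem_nhds hc)] with h hh
    rw [zero_apply, sub_zero, Real.norm_eq_abs]
    calc |f (x + h) - f x| ≤ C * ‖h‖ ^ α := by
          simpa [dist_eq_norm] using hf (x + h) x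
      _ = C * ‖h‖ ^ (α - 1) * ‖h‖ := by
          rw [mul_assoc, ← Real.rpow_add_one' (norm_nonneg h) (by linarith), sub_add_cancel]
      _ ≤ c * ‖h‖ := mul_le_mul_of_nonneg_right hh (norm_nonneg h)
  exact is_const_of_fderiv_eq_zero (fun x => (hderiv x).differentiableAt)
    (fun x => (hderiv x).fderiv) x y

open Module in
lemma addHaar_real_ball_of_pos {E : Type*} [NormedAddCommGroup E] [NormedSpace ℝ E]
    [MeasurableSpace E] [BorelSpace E] [FiniteDimensional ℝ E] (μ : Measure E)
    [μ.IsAddHaarMeasure] (x : E) {r : ℝ} (hr : 0 < r) :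
    μ.real (ball x r) = r ^ finrank ℝ E * μ.real (ball 0 1) := by
  rw [measureReal_def, Measure.addHaar_ball_of_pos μ x hr, ENNReal.toReal_mul,
    ENNReal.toReal_ofReal (by positivity), measureReal_def]

section Campanato

open Module

variable {E : Type*} [NormedAddCommGroup E] [MeasurableSpace E] {μ : Measure E}

/-- Campanato's condition. -/
def HasMeanOscillationLE (μ : Measure E) (b : E → ℝ) (A α : ℝ) : Prop :=
  ∀ z ρ, 0 < ρ → ∃ m, ⨍ x in ball z ρ, |b x - m| ∂μ ≤ A * ρ ^ α

variable {b : E → ℝ} {A α : ℝ}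

lemma HasMeanOscillationLE.nonneg (hosc : HasMeanOscillationLE μ b A α) : 0 ≤ A := by
  obtain ⟨m, hm⟩ := hosc 0 1 one_pos
  rw [Real.one_rpow, mul_one] at hm
  exact (setAverage_nonneg fun x => abs_nonneg _).trans hm

variable [NormedSpace ℝ E] [FiniteDimensional ℝ E] [μ.IsAddHaarMeasure]

lemma HasMeanOscillationLE.of_setAverage_pow_le {k : ℕ} (hk : k ≠ 0) (hA : 0 ≤ A)
    (hb : LocallyIntegrable b μ) (hbk : ∀ c, LocallyIntegrable (fun x => |b x - c| ^ k) μ)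
    (h : ∀ z ρ, 0 < ρ → ∃ m, ⨍ x in ball z ρ, |b x - m| ^ k ∂μ ≤ A ^ k * ρ ^ (α * k)) :
    HasMeanOscillationLE μ b A α := fun z ρ hρ => by
  obtain ⟨m, hm⟩ := h z ρ hρ
  refine ⟨m, (pow_le_pow_iff_left₀ (setAverage_nonneg fun x => abs_nonneg _)
    (mul_nonneg hA (Real.rpow_nonneg hρ.le _)) hk).1 ?_⟩
  rw [mul_pow, ← Real.rpow_mul_natCast hρ.le]
  exact (pow_setAverage_le_setAverage_pow (measure_ball_pos μ z hρ).ne' measure_ball_lt_top.ne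
    (fun x => abs_nonneg _) ((hb.integrableOn_ball z ρ).sub
      (integrableOn_const measure_ball_lt_top.ne)).abs k ((hbk m).integrableOn_ball z ρ)).trans hm

lemma HasMeanOscillationLE.setAverage_abs_sub_setAverage_le
    (hosc : HasMeanOscillationLE μ b A α) (hb : LocallyIntegrable b μ) (z : E) {ρ : ℝ}
    (hρ : 0 < ρ) : ⨍ x in ball z ρ, |b x - ⨍ y in ball z ρ, b y ∂μ| ∂μ ≤ 2 * (A * ρ ^ α) := by
  obtain ⟨m, hm⟩ := hosc z ρ hρ
  exact (_root_.setAverage_abs_sub_setAverage_le (measure_ball_pos μ z hρ).ne'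
    measure_ball_lt_top.ne (hb.integrableOn_ball z ρ) m).trans (by linarith)

variable [BorelSpace E]

lemma ae_tendsto_setAverage_ball_two_inv_pow (hb : LocallyIntegrable b μ) :
    ∀ᵐ x ∂μ, Tendsto (fun k : ℕ => ⨍ y in ball x (2⁻¹ ^ k), b y ∂μ) atTop (𝓝 (b x)) := by
  filter_upwards [IsUnifLocDoublingMeasure.ae_tendsto_average μ hb 1] with x hx
  have hball (k : ℕ) : closedBall x (2⁻¹ ^ k) =ᵐ[μ] ball x (2⁻¹ ^ k) := ae_eq_set.2
    ⟨by rw [closedBall_sdiff_ball]; exact Measure.addHaar_sphere_of_ne_zero μ x (by positivity),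
      by rw [sdiff_eq_empty.2 ball_subset_closedBall, measure_empty]⟩
  refine (hx (fun _ : ℕ => x) (fun k => 2⁻¹ ^ k) (tendsto_nhdsWithin_iff.2
    ⟨tendsto_pow_atTop_nhds_zero_of_lt_one (by norm_num) (by norm_num),
      Eventually.of_forall fun k => mem_Ioi.2 (by positivity)⟩)
    (Eventually.of_forall fun k => by simp)).congr fun k => setAverage_congr (hball k)

lemma HasMeanOscillationLE.abs_setAverage_sub_setAverage_le (hosc : HasMeanOscillationLE μ b A α)
    (hb : LocallyIntegrable b μ) {w z : E} {s ρ : ℝ} (hs : 0 < s) (hρ : 0 < ρ)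
    (hsub : ball w s ⊆ ball z ρ) :
    |⨍ x in ball w s, b x ∂μ - ⨍ x in ball z ρ, b x ∂μ| ≤
      (1 + (ρ / s) ^ finrank ℝ E) * (A * ρ ^ α) := by
  obtain ⟨m, hm⟩ := hosc z ρ hρ
  have hw0 : μ (ball w s) ≠ 0 := (measure_ball_pos μ w hs).ne'
  have hz0 : μ (ball z ρ) ≠ 0 := (measure_ball_pos μ z hρ).ne'
  have hratio : μ.real (ball z ρ) / μ.real (ball w s) = (ρ / s) ^ finrank ℝ E := by
    have : 0 < μ.real (ball (0 : E) 1) := ENNReal.toReal_pos (measure_ball_pos μ 0 one_pos).ne'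
      measure_ball_lt_top.ne
    rw [addHaar_real_ball_of_pos μ z hρ, addHaar_real_ball_of_pos μ w hs, div_pow]
    field_simp
  have hw : |⨍ x in ball w s, b x ∂μ - m| ≤ (ρ / s) ^ finrank ℝ E * (A * ρ ^ α) := by
    refine (abs_setAverage_sub_le hw0 measure_ball_lt_top.ne (hb.integrableOn_ball w s) m).trans ?_
    refine (setAverage_le_mul_setAverage_of_subset hsub hw0 measure_ball_lt_top.ne
      (fun x => abs_nonneg _)
      ((hb.integrableOn_ball z ρ).sub (integrableOn_const measure_ball_lt_top.ne)).abs).trans ?_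
    rw [hratio]
    exact mul_le_mul_of_nonneg_left hm (by positivity)
  have hz : |⨍ x in ball z ρ, b x ∂μ - m| ≤ A * ρ ^ α :=
    (abs_setAverage_sub_le hz0 measure_ball_lt_top.ne (hb.integrableOn_ball z ρ) m).trans hm
  calc _ ≤ |⨍ x in ball w s, b x ∂μ - m| + |⨍ x in ball z ρ, b x ∂μ - m| :=
        (abs_sub_le _ m _).trans_eq (by rw [abs_sub_comm m])
    _ ≤ (ρ / s) ^ finrank ℝ E * (A * ρ ^ α) + A * ρ ^ α := add_le_add hw hz
    _ = _ := by ring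

lemma HasMeanOscillationLE.abs_setAverage_sub_setAverage_le_of_le_two_mul
    (hosc : HasMeanOscillationLE μ b A α) (hb : LocallyIntegrable b μ) (z : E) {s ρ : ℝ}
    (hs : 0 < s) (hsρ : s ≤ ρ) (hρs : ρ ≤ 2 * s) :
    |⨍ x in ball z s, b x ∂μ - ⨍ x in ball z ρ, b x ∂μ| ≤
      (1 + 2 ^ finrank ℝ E) * (A * ρ ^ α) := by
  refine (hosc.abs_setAverage_sub_setAverage_le hb hs (hs.trans_le hsρ)
    (ball_subset_ball hsρ)).trans (mul_le_mul_of_nonneg_right ?_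
      (mul_nonneg hosc.nonneg (Real.rpow_nonneg (hs.le.trans hsρ) _)))
  have : ρ / s ≤ 2 := by rwa [div_le_iff₀ hs]
  exact add_le_add_right (pow_le_pow_left₀ (div_nonneg (hs.le.trans hsρ) hs.le) this _) 1

lemma HasMeanOscillationLE.abs_setAverage_sub_setAverage_le_geom_sum
    (hosc : HasMeanOscillationLE μ b A α) (hb : LocallyIntegrable b μ) (z : E) {s : ℝ}
    (hs : 0 < s) (N : ℕ) {ρ : ℝ} (hsρ : s ≤ ρ) (hρs : ρ ≤ 2 ^ N * s) :
    |⨍ x in ball z s, b x ∂μ - ⨍ x in ball z ρ, b x ∂μ| ≤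
      (1 + 2 ^ finrank ℝ E) * A * ρ ^ α * ∑ i ∈ Finset.range N, (2⁻¹ ^ α) ^ i := by
  set c := (1 + 2 ^ finrank ℝ E) * A
  have hc : 0 ≤ c := by have := hosc.nonneg; positivity
  induction N generalizing ρ with
  | zero =>
    rw [le_antisymm hsρ (by simpa using hρs), sub_self, abs_zero]
    simp
  | succ N ih =>
    rcases le_or_gt ρ (2 * s) with hρ2 | hρ2
    · have hsum : 1 ≤ ∑ i ∈ Finset.range (N + 1), ((2 : ℝ)⁻¹ ^ α) ^ i := by
        rw [geom_sum_succ]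
        have : 0 ≤ ∑ i ∈ Finset.range N, ((2 : ℝ)⁻¹ ^ α) ^ i := by positivity
        nlinarith [Real.rpow_nonneg (by norm_num : (0 : ℝ) ≤ 2⁻¹) α]
      calc _ ≤ c * ρ ^ α * 1 := by
            rw [mul_one, mul_assoc]
            exact hosc.abs_setAverage_sub_setAverage_le_of_le_two_mul hb z hs hsρ hρ2
        _ ≤ _ := mul_le_mul_of_nonneg_left hsum
            (mul_nonneg hc (Real.rpow_nonneg (hs.le.trans hsρ) _))
    · have hhalf := ih (ρ := ρ / 2) (by linarith) (by rw [pow_succ] at hρs; linarith)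
      have hstep := hosc.abs_setAverage_sub_setAverage_le_of_le_two_mul hb z (s := ρ / 2)
        (ρ := ρ) (by linarith) (by linarith) (by linarith)
      calc _ ≤ |⨍ x in ball z s, b x ∂μ - ⨍ x in ball z (ρ / 2), b x ∂μ| +
            |⨍ x in ball z (ρ / 2), b x ∂μ - ⨍ x in ball z ρ, b x ∂μ| := abs_sub_le _ _ _
        _ ≤ c * (ρ / 2) ^ α * ∑ i ∈ Finset.range N, ((2 : ℝ)⁻¹ ^ α) ^ i + c * ρ ^ α := by
            refine add_le_add hhalf (hstep.trans_eq ?_)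
            ring
        _ = _ := by
            rw [div_eq_mul_inv, Real.mul_rpow (by linarith) (by norm_num), geom_sum_succ]
            ring

/-- The geometric series of the dyadic scales between `s` and `ρ` converges because `α > 0`. -/
lemma HasMeanOscillationLE.abs_setAverage_sub_setAverage_le_of_le
    (hosc : HasMeanOscillationLE μ b A α) (hα : 0 < α) (hb : LocallyIntegrable b μ) (z : E)
    {s ρ : ℝ} (hs : 0 < s) (hsρ : s ≤ ρ) :
    |⨍ x in ball z s, b x ∂μ - ⨍ x in ball z ρ, b x ∂μ| ≤
      (1 + 2 ^ finrank ℝ E) / (1 - 2⁻¹ ^ α) * (A * ρ ^ α) := by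
  obtain ⟨N, hN⟩ := pow_unbounded_of_one_lt (ρ / s) (one_lt_two : (1 : ℝ) < 2)
  have hgeom : ∑ i ∈ Finset.range N, ((2 : ℝ)⁻¹ ^ α) ^ i ≤ (1 - 2⁻¹ ^ α)⁻¹ := by
    have := geom_sum_Ico_le_of_lt_one (x := (2 : ℝ)⁻¹ ^ α) (m := 0) (n := N) (by positivity)
      (Real.rpow_lt_one (by norm_num) (by norm_num) hα)
    rwa [← Finset.range_eq_Ico, pow_zero, one_div] at this
  calc _ ≤ (1 + 2 ^ finrank ℝ E) * A * ρ ^ α * ∑ i ∈ Finset.range N, ((2 : ℝ)⁻¹ ^ α) ^ i :=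
        hosc.abs_setAverage_sub_setAverage_le_geom_sum hb z hs N hsρ
          (by rw [div_lt_iff₀ hs] at hN; linarith)
    _ ≤ (1 + 2 ^ finrank ℝ E) * A * ρ ^ α * (1 - 2⁻¹ ^ α)⁻¹ :=
        mul_le_mul_of_nonneg_left hgeom
          (by have := hosc.nonneg; have := Real.rpow_nonneg (hs.le.trans hsρ) α; positivity)
    _ = _ := by ring

lemma HasMeanOscillationLE.exists_tendsto_setAverage (hosc : HasMeanOscillationLE μ b A α)
    (hα : 0 < α) (hb : LocallyIntegrable b μ) (x : E) :
    ∃ L, Tendsto (fun k : ℕ => ⨍ y in ball x (2⁻¹ ^ k), b y ∂μ) atTop (𝓝 L) ∧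
      ∀ ρ, 0 < ρ → |L - ⨍ y in ball x ρ, b y ∂μ| ≤
        (1 + 2 ^ finrank ℝ E) / (1 - 2⁻¹ ^ α) * (A * ρ ^ α) := by
  have hcauchy : CauchySeq fun k : ℕ => ⨍ y in ball x (2⁻¹ ^ k), b y ∂μ := by
    refine cauchySeq_of_le_geometric (2⁻¹ ^ α) ((1 + 2 ^ finrank ℝ E) / (1 - 2⁻¹ ^ α) * A)
      (Real.rpow_lt_one (by norm_num) (by norm_num) hα) fun k => ?_
    rw [Real.dist_eq, abs_sub_comm]
    refine (hosc.abs_setAverage_sub_setAverage_le_of_le hα hb x (by positivity)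
      (pow_le_pow_of_le_one (by norm_num) (by norm_num) k.le_succ)).trans_eq ?_
    rw [← Real.rpow_pow_comm (by norm_num)]
    ring
  obtain ⟨L, hL⟩ := cauchySeq_tendsto_of_complete hcauchy
  refine ⟨L, hL, fun ρ hρ => le_of_tendsto (hL.sub_const _).abs ?_⟩
  filter_upwards [(tendsto_pow_atTop_nhds_zero_of_lt_one (by norm_num : (0 : ℝ) ≤ 2⁻¹)
    (by norm_num)).eventually (ge_mem_nhds hρ)] with k hk
  exact hosc.abs_setAverage_sub_setAverage_le_of_le hα hb x (by positivity) hk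

-- Twice the constant `(1 + 2 ^ n) / (1 - 2⁻¹ ^ α)` of the dyadic chain of averages, plus the
-- cost `2 (1 + 2 ^ n) 2 ^ α` of comparing the balls of radius `|x - y|` around `x` and `y` with
-- the ball of radius `2 |x - y|` around `x`.
noncomputable def campanatoConst (n : ℕ) (α : ℝ) : ℝ :=
  2 * (1 + 2 ^ n) * ((1 - 2⁻¹ ^ α)⁻¹ + 2 ^ α)

/-- **Campanato's theorem**; the representative is the limit of the averages on shrinking
balls. -/
theorem HasMeanOscillationLE.exists_ae_eq_holder (hosc : HasMeanOscillationLE μ b A α)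
    (hα : 0 < α) (hb : LocallyIntegrable b μ) :
    ∃ b' : E → ℝ, b =ᵐ[μ] b' ∧
      ∀ x y, |b' x - b' y| ≤ campanatoConst (finrank ℝ E) α * A * dist x y ^ α := by
  choose b' hb' hlim using hosc.exists_tendsto_setAverage hα hb
  refine ⟨b', ?_, fun x y => ?_⟩
  · filter_upwards [ae_tendsto_setAverage_ball_two_inv_pow hb] with x hx
    exact tendsto_nhds_unique hx (hb' x)
  rcases eq_or_ne x y with rfl | hxy
  · rw [sub_self, abs_zero, dist_self, Real.zero_rpow hα.ne', mul_zero]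
  set a : E → ℝ → ℝ := fun x ρ => ⨍ y in ball x ρ, b y ∂μ
  set D := (1 + 2 ^ finrank ℝ E) / (1 - (2 : ℝ)⁻¹ ^ α)
  set ρ := dist x y
  have hρ : 0 < ρ := dist_pos.2 hxy
  have hxx := hosc.abs_setAverage_sub_setAverage_le_of_le_two_mul hb x hρ (by linarith) le_rfl
  have hyx := hosc.abs_setAverage_sub_setAverage_le hb (w := y) (z := x) (s := ρ) (ρ := 2 * ρ) hρ
    (by linarith) (ball_subset_ball' (by rw [dist_comm]; linarith))
  rw [mul_div_assoc, div_self hρ.ne', mul_one] at hyx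
  rw [Real.mul_rpow (by norm_num) hρ.le] at hxx hyx
  calc |b' x - b' y| ≤ |b' x - a x ρ| + |a x ρ - a x (2 * ρ)| + |a x (2 * ρ) - a y ρ| +
        |a y ρ - b' y| := by
        linarith [abs_sub_le (b' x) (a x ρ) (b' y), abs_sub_le (a x ρ) (a x (2 * ρ)) (b' y),
          abs_sub_le (a x (2 * ρ)) (a y ρ) (b' y)]
    _ ≤ D * (A * ρ ^ α) + (1 + 2 ^ finrank ℝ E) * (A * (2 ^ α * ρ ^ α)) +
        (1 + 2 ^ finrank ℝ E) * (A * (2 ^ α * ρ ^ α)) + D * (A * ρ ^ α) := by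
        gcongr
        · exact hlim x ρ hρ
        · rw [abs_sub_comm]; exact hyx
        · rw [abs_sub_comm]; exact hlim y ρ hρ
    _ = campanatoConst (finrank ℝ E) α * A * ρ ^ α := by
        simp only [campanatoConst, D]
        ring

end Campanato

lemma integral_mul_integral_le_norm_integral_integral {X Y : Type*} [MeasurableSpace X]
    [MeasurableSpace Y] {μ : Measure X} {ν : Measure Y} [SFinite μ] [SFinite ν]
    {Φ : X × Y → ℂ} (hΦ : Integrable Φ (μ.prod ν)) {u : X → ℝ} {v : Y → ℝ} (hu : Integrable u μ)
    (hv : Integrable v ν) (h : ∀ x y, u x * v y ≤ (Φ (x, y)).re) :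
    (∫ x, u x ∂μ) * (∫ y, v y ∂ν) ≤ ‖∫ x, ∫ y, Φ (x, y) ∂ν ∂μ‖ :=
  calc (∫ x, u x ∂μ) * (∫ y, v y ∂ν) = ∫ w, u w.1 * v w.2 ∂(μ.prod ν) :=
        (integral_prod_mul u v).symm
    _ ≤ ∫ w, (Φ w).re ∂(μ.prod ν) := integral_mono (hu.mul_prod hv) hΦ.re fun w => h w.1 w.2
    _ = (∫ x, ∫ y, Φ (x, y) ∂ν ∂μ).re := by
        rw [← integral_prod Φ hΦ]
        exact integral_re hΦ
    _ ≤ _ := Complex.re_le_norm _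

section OffSupport

variable {d k : ℕ} {K : EuclideanSpace ℝ (Fin d) → EuclideanSpace ℝ (Fin d) → ℂ}
  {b : EuclideanSpace ℝ (Fin d) → ℝ} {Θ p q c1 : ℝ}

def OffSupportIntegrable (K : EuclideanSpace ℝ (Fin d) → EuclideanSpace ℝ (Fin d) → ℂ)
    (b : EuclideanSpace ℝ (Fin d) → ℝ) (k : ℕ) : Prop :=
  ∀ (y0 x0 : EuclideanSpace ℝ (Fin d)) (r : ℝ), 0 < r → 3 * r ≤ dist y0 x0 →
    IntegrableOn
      (fun z : EuclideanSpace ℝ (Fin d) × EuclideanSpace ℝ (Fin d) =>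
        |b z.1 - b z.2| ^ k * ‖K z.1 z.2‖)
      ((ball x0 r) ×ˢ (ball y0 r)) volume

/-- The weak form, tested on separated balls, of the `L^p → L^q` bound with constant `Θ` of the
iterated commutator `T_b^k`. -/
def OffSupportBound (K : EuclideanSpace ℝ (Fin d) → EuclideanSpace ℝ (Fin d) → ℂ)
    (b : EuclideanSpace ℝ (Fin d) → ℝ) (k : ℕ) (Θ p q : ℝ) : Prop :=
  ∀ (y0 x0 : EuclideanSpace ℝ (Fin d)) (r : ℝ), 0 < r → 3 * r ≤ dist y0 x0 →
    ∀ (f g : EuclideanSpace ℝ (Fin d) → ℂ) (Mf Mg : ℝ),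
      Measurable f → Measurable g →
      (∀ x ∉ ball y0 r, f x = 0) → (∀ x ∉ ball x0 r, g x = 0) →
      (∀ x, ‖f x‖ ≤ Mf) → (∀ x, ‖g x‖ ≤ Mg) →
      ‖∫ x in ball x0 r, ∫ y in ball y0 r,
          (((b x - b y) ^ k : ℝ) : ℂ) * K x y * f y * g x‖
        ≤ Θ * (Mf * (volume (ball y0 r)).toReal ^ (1 / p))
            * (Mg * (volume (ball x0 r)).toReal ^ (1 - 1 / q))

lemma OffSupportIntegrable.integrable_prod (habs : OffSupportIntegrable K b k)
    (hKmeas : Measurable fun z : EuclideanSpace ℝ (Fin d) × EuclideanSpace ℝ (Fin d) =>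
      K z.1 z.2)
    (hb : Measurable b) {z x0 : EuclideanSpace ℝ (Fin d)} {ρ : ℝ} (hρ : 0 < ρ)
    (hdist : 3 * ρ ≤ dist z x0) {f g : EuclideanSpace ℝ (Fin d) → ℂ} (hfm : Measurable f)
    (hgm : Measurable g) (hf : ∀ y, ‖f y‖ ≤ 1) (hg : ∀ x, ‖g x‖ ≤ 1) :
    Integrable (fun w : EuclideanSpace ℝ (Fin d) × EuclideanSpace ℝ (Fin d) =>
        (((b w.1 - b w.2) ^ k : ℝ) : ℂ) * K w.1 w.2 * f w.2 * g w.1)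
      ((volume.restrict (ball x0 ρ)).prod (volume.restrict (ball z ρ))) := by
  rw [Measure.prod_restrict]
  refine (habs z x0 ρ hρ hdist).mono' ((((Complex.measurable_ofReal.comp
    (((hb.comp measurable_fst).sub (hb.comp measurable_snd)).pow_const k)).mul hKmeas).mul
    (hfm.comp measurable_snd)).mul (hgm.comp measurable_fst)).aestronglyMeasurable
    (Eventually.of_forall fun w => ?_)
  rw [norm_mul, norm_mul, norm_mul, Complex.norm_real, Real.norm_eq_abs, abs_pow]
  calc _ ≤ |b w.1 - b w.2| ^ k * ‖K w.1 w.2‖ * 1 * 1 := by gcongr; exacts [hf _, hg _]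
    _ = _ := by ring

lemma OffSupportBound.norm_integral_indicator_le (hweak : OffSupportBound K b k Θ p q)
    {z x0 : EuclideanSpace ℝ (Fin d)} {ρ : ℝ} (hρ : 0 < ρ) (hdist : 3 * ρ ≤ dist z x0)
    {S T : Set (EuclideanSpace ℝ (Fin d))} (hS : MeasurableSet S) (hT : MeasurableSet T)
    (hSB : S ⊆ ball x0 ρ) (hTB : T ⊆ ball z ρ) {σ : ℂ} (hσ : ‖σ‖ = 1) {ε : ℝ} (hε : |ε| = 1) :
    ‖∫ x in ball x0 ρ, ∫ y in ball z ρ, (((b x - b y) ^ k : ℝ) : ℂ) * K x y *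
        T.indicator (fun _ => (ε : ℂ)) y * S.indicator (fun _ => σ) x‖ ≤
      Θ * volume.real (ball z ρ) ^ (1 / p) * volume.real (ball x0 ρ) ^ (1 - 1 / q) := by
  have hfm : Measurable (T.indicator fun _ => (ε : ℂ)) := measurable_const.indicator hT
  have hgm : Measurable (S.indicator fun _ => σ) := measurable_const.indicator hS
  have hf0 : ∀ y ∉ ball z ρ, T.indicator (fun _ => (ε : ℂ)) y = 0 := fun y hy =>
    indicator_of_notMem (fun h => hy (hTB h)) _
  have hg0 : ∀ x ∉ ball x0 ρ, S.indicator (fun _ => σ) x = 0 := fun x hx =>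
    indicator_of_notMem (fun h => hx (hSB h)) _
  simpa only [one_mul, measureReal_def] using hweak z x0 ρ hρ hdist _ _ 1 1 hfm hgm hf0 hg0
    (fun y => (norm_indicator_le_norm_self _ y).trans_eq (by simp [hε]))
    (fun x => (norm_indicator_le_norm_self _ x).trans_eq hσ)

/-- Testing with `f = ε 1_T` and `g = σ 1_S`: the bilinear form is at least
`|S| c1 / |B| ∫_T |b - m| ^ k`. -/
lemma OffSupportBound.setIntegral_abs_sub_pow_le
    (hweak : OffSupportBound K b k Θ p q) (habs : OffSupportIntegrable K b k)
    (hKmeas : Measurable fun z : EuclideanSpace ℝ (Fin d) × EuclideanSpace ℝ (Fin d) =>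
      K z.1 z.2)
    (hb : Measurable b) (hc1 : 0 < c1) {z x0 : EuclideanSpace ℝ (Fin d)} {ρ : ℝ} (hρ : 0 < ρ)
    (hdist : 3 * ρ ≤ dist z x0) {σ : ℂ} (hσ : ‖σ‖ = 1)
    (hK : ∀ x ∈ ball x0 ρ, ∀ y ∈ ball z ρ, c1 / volume.real (ball z ρ) ≤ (σ * K x y).re)
    {S T : Set (EuclideanSpace ℝ (Fin d))} (hS : MeasurableSet S) (hT : MeasurableSet T)
    (hSB : S ⊆ ball x0 ρ) (hTB : T ⊆ ball z ρ)
    (hShalf : volume.real (ball z ρ) ≤ 2 * volume.real S) {m ε : ℝ} (hε : |ε| = 1)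
    (hmT : IntegrableOn (fun y => |b y - m| ^ k) T)
    (hsign : ∀ x ∈ S, ∀ y ∈ T, |b y - m| ^ k ≤ ε * (b x - b y) ^ k) :
    ∫ y in T, |b y - m| ^ k ≤
      2 / c1 * (Θ * volume.real (ball z ρ) ^ (1 / p) * volume.real (ball x0 ρ) ^ (1 - 1 / q)) := by
  set V := volume.real (ball z ρ)
  have hV : 0 < V := ENNReal.toReal_pos (measure_ball_pos volume z hρ).ne' measure_ball_lt_top.ne
  have hu : Integrable (S.indicator 1) (volume.restrict (ball x0 ρ)) :=
    (IntegrableOn.integrable_indicator (integrableOn_const (C := (1 : ℝ))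
      (ne_top_of_le_ne_top measure_ball_lt_top.ne (measure_mono hSB))) hS).restrict
  have hv : Integrable (T.indicator fun y => c1 / V * |b y - m| ^ k)
      (volume.restrict (ball z ρ)) :=
    (IntegrableOn.integrable_indicator (hmT.const_mul _) hT).restrict
  have hlower (x y) : S.indicator 1 x * T.indicator (fun y => c1 / V * |b y - m| ^ k) y ≤
      ((((b x - b y) ^ k : ℝ) : ℂ) * K x y * T.indicator (fun _ => (ε : ℂ)) y *
        S.indicator (fun _ => σ) x).re := by
    by_cases hx : x ∈ S
    · by_cases hy : y ∈ T
      · rw [indicator_of_mem hx, indicator_of_mem hy, indicator_of_mem hy, indicator_of_mem hx,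
          Pi.one_apply, one_mul, show (((b x - b y) ^ k : ℝ) : ℂ) * K x y * ε * σ =
            ((ε * (b x - b y) ^ k : ℝ) : ℂ) * (σ * K x y) by push_cast; ring,
          Complex.re_ofReal_mul, mul_comm]
        exact mul_le_mul (hsign x hx y hy) (hK x (hSB hx) y (hTB hy)) (by positivity)
          ((by positivity : (0 : ℝ) ≤ |b y - m| ^ k).trans (hsign x hx y hy))
      · simp [hy]
    · simp [hx]
  have hΦ := habs.integrable_prod hKmeas hb hρ hdist (measurable_const.indicator hT)
    (measurable_const.indicator hS) (f := T.indicator fun _ => (ε : ℂ))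
    (g := S.indicator fun _ => σ)
    (fun y => (norm_indicator_le_norm_self _ y).trans_eq (by simp [hε]))
    (fun x => (norm_indicator_le_norm_self _ x).trans_eq hσ)
  have h := (integral_mul_integral_le_norm_integral_integral hΦ hu hv hlower).trans
    (hweak.norm_integral_indicator_le hρ hdist hS hT hSB hTB hσ hε)
  rw [integral_indicator_one hS, measureReal_restrict_apply hS, inter_eq_left.2 hSB,
    integral_indicator hT, Measure.restrict_restrict hT, inter_eq_left.2 hTB,
    integral_const_mul] at h
  have hI : 0 ≤ ∫ y in T, |b y - m| ^ k := integral_nonneg fun y => by positivity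
  rw [div_mul_eq_mul_div, le_div_iff₀ hc1]
  calc (∫ y in T, |b y - m| ^ k) * c1 = c1 / V * V * ∫ y in T, |b y - m| ^ k := by
        field_simp
    _ ≤ c1 / V * (2 * volume.real S) * ∫ y in T, |b y - m| ^ k := by gcongr
    _ = 2 * (volume.real S * (c1 / V * ∫ y in T, |b y - m| ^ k)) := by ring
    _ ≤ _ := by gcongr

lemma OffSupportBound.exists_setIntegral_abs_sub_pow_le {C1 : ℝ}
    (hweak : OffSupportBound K b k Θ p q) (habs : OffSupportIntegrable K b k)
    (hKmeas : Measurable fun z : EuclideanSpace ℝ (Fin d) × EuclideanSpace ℝ (Fin d) =>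
      K z.1 z.2)
    (hb : Measurable b) (hc1 : 0 < c1) (hpos : UnifQuantPositivityBalls d K c1 C1)
    {z : EuclideanSpace ℝ (Fin d)} {ρ : ℝ} (hρ : 0 < ρ)
    (hbk : ∀ c, IntegrableOn (fun x => |b x - c| ^ k) (ball z ρ)) :
    ∃ m, ∫ x in ball z ρ, |b x - m| ^ k ≤ 4 / c1 *
      (Θ * volume.real (ball z ρ) ^ (1 / p) * volume.real (ball z ρ) ^ (1 - 1 / q)) := by
  obtain ⟨x0, σ, hσ, h3, -, hK⟩ := hpos z ρ hρ
  have hVeq : volume (ball x0 ρ) = volume (ball z ρ) :=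
    (Measure.addHaar_ball_center volume x0 ρ).trans (Measure.addHaar_ball_center volume z ρ).symm
  have hhalf {S : Set (EuclideanSpace ℝ (Fin d))} (hSB : S ⊆ ball x0 ρ)
      (h : volume (ball x0 ρ) ≤ 2 * volume S) : volume.real (ball z ρ) ≤ 2 * volume.real S := by
    rw [hVeq] at h
    simpa only [measureReal_def, ENNReal.toReal_mul, ENNReal.toReal_ofNat] using
      ENNReal.toReal_mono (ENNReal.mul_ne_top ENNReal.ofNat_ne_top
        (ne_top_of_le_ne_top measure_ball_lt_top.ne (measure_mono hSB))) h
  have : IsFiniteMeasure (volume.restrict (ball x0 ρ)) :=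
    isFiniteMeasure_restrict.2 measure_ball_lt_top.ne
  obtain ⟨m, hm_ge, hm_le⟩ := exists_median (μ := volume.restrict (ball x0 ρ)) hb
  have hge : MeasurableSet {x | m ≤ b x} := measurableSet_le measurable_const hb
  have hle : MeasurableSet {x | b x ≤ m} := measurableSet_le hb measurable_const
  rw [Measure.restrict_apply_univ, Measure.restrict_apply hge] at hm_ge
  rw [Measure.restrict_apply_univ, Measure.restrict_apply hle] at hm_le
  have h_below := hweak.setIntegral_abs_sub_pow_le habs hKmeas hb hc1 hρ (by rwa [dist_comm])
    hσ hK (hge.inter measurableSet_ball) (measurableSet_ball.inter hle) inter_subset_right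
    inter_subset_left (hhalf inter_subset_right hm_ge) abs_one ((hbk m).mono_set inter_subset_left)
    fun x hx y hy => by
      have hxm : m ≤ b x := hx.1
      have hym : b y ≤ m := hy.2
      rw [one_mul, abs_of_nonpos (sub_nonpos.2 hym), neg_sub]
      exact pow_le_pow_left₀ (sub_nonneg.2 hym) (by linarith) k
  have h_above := hweak.setIntegral_abs_sub_pow_le habs hKmeas hb hc1 hρ (by rwa [dist_comm])
    hσ hK (hle.inter measurableSet_ball) (measurableSet_ball.diff hle) inter_subset_right
    sdiff_subset (hhalf inter_subset_right hm_le) (by simp : |(-1 : ℝ) ^ k| = 1)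
    ((hbk m).mono_set sdiff_subset) fun x hx y hy => by
      have hxm : b x ≤ m := hx.1
      have hym : m < b y := not_le.1 hy.2
      rw [abs_of_pos (sub_pos.2 hym), ← mul_pow, neg_one_mul, neg_sub]
      exact pow_le_pow_left₀ (sub_nonneg.2 hym.le) (by linarith) k
  rw [show volume.real (ball x0 ρ) = volume.real (ball z ρ) from congrArg ENNReal.toReal hVeq]
    at h_below h_above
  refine ⟨m, ?_⟩
  rw [← integral_inter_add_sdiff hle (hbk m)]
  exact (add_le_add h_below h_above).trans_eq (by ring)

lemma OffSupportBound.exists_setAverage_abs_sub_pow_le {C1 : ℝ}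
    (hweak : OffSupportBound K b k Θ p q) (habs : OffSupportIntegrable K b k)
    (hKmeas : Measurable fun z : EuclideanSpace ℝ (Fin d) × EuclideanSpace ℝ (Fin d) =>
      K z.1 z.2)
    (hb : Measurable b) (hc1 : 0 < c1) (hpos : UnifQuantPositivityBalls d K c1 C1)
    {z : EuclideanSpace ℝ (Fin d)} {ρ : ℝ} (hρ : 0 < ρ)
    (hbk : ∀ c, IntegrableOn (fun x => |b x - c| ^ k) (ball z ρ)) :
    ∃ m, ⨍ x in ball z ρ, |b x - m| ^ k ≤ 4 / c1 * Θ *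
      volume.real (ball (0 : EuclideanSpace ℝ (Fin d)) 1) ^ (1 / p - 1 / q) *
        ρ ^ (d * (1 / p - 1 / q)) := by
  obtain ⟨m, hm⟩ := hweak.exists_setIntegral_abs_sub_pow_le habs hKmeas hb hc1 hpos hρ hbk
  have hV : 0 < volume.real (ball z ρ) :=
    ENNReal.toReal_pos (measure_ball_pos volume z hρ).ne' measure_ball_lt_top.ne
  have hv : 0 < volume.real (ball (0 : EuclideanSpace ℝ (Fin d)) 1) :=
    ENNReal.toReal_pos (measure_ball_pos volume _ one_pos).ne' measure_ball_lt_top.ne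
  refine ⟨m, ?_⟩
  rw [setAverage_eq, smul_eq_mul, inv_mul_le_iff₀ hV]
  refine hm.trans_eq ?_
  rw [mul_assoc Θ, ← Real.rpow_add hV, show 1 / p + (1 - 1 / q) = 1 + (1 / p - 1 / q) by ring,
    Real.rpow_add hV, Real.rpow_one, addHaar_real_ball_of_pos volume z hρ,
    finrank_euclideanSpace_fin, Real.mul_rpow (by positivity) hv.le, ← Real.rpow_natCast,
    ← Real.rpow_mul hρ.le]
  ring

lemma OffSupportBound.hasMeanOscillationLE {C1 : ℝ} (hweak : OffSupportBound K b k Θ p q)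
    (habs : OffSupportIntegrable K b k)
    (hKmeas : Measurable fun z : EuclideanSpace ℝ (Fin d) × EuclideanSpace ℝ (Fin d) =>
      K z.1 z.2)
    (hb : Measurable b) (hbk : LocallyIntegrable (fun x => |b x| ^ k)) (hk : 1 ≤ k) (hΘ : 0 ≤ Θ)
    (hc1 : 0 < c1) (hpos : UnifQuantPositivityBalls d K c1 C1) :
    HasMeanOscillationLE volume b
      ((4 / c1 * Θ * volume.real (ball (0 : EuclideanSpace ℝ (Fin d)) 1) ^ (1 / p - 1 / q)) ^
        (k⁻¹ : ℝ)) (d / k * (1 / p - 1 / q)) := by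
  have hk0 : k ≠ 0 := by omega
  refine .of_setAverage_pow_le hk0 (by positivity) (hbk.of_abs_pow hk hb.aestronglyMeasurable)
    (hbk.abs_sub_const_pow hb.aestronglyMeasurable) fun z ρ hρ => ?_
  rw [Real.rpow_inv_natCast_pow (by positivity) hk0,
    show (d : ℝ) / k * (1 / p - 1 / q) * k = d * (1 / p - 1 / q) by field_simp]
  exact hweak.exists_setAverage_abs_sub_pow_le habs hKmeas hb hc1 hpos hρ fun c =>
    (hbk.abs_sub_const_pow hb.aestronglyMeasurable c).integrableOn_ball z ρ

end OffSupport

theorem statement17_general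
    (d : ℕ) (k : ℕ) (hk : 1 ≤ k)
    (K : EuclideanSpace ℝ (Fin d) → EuclideanSpace ℝ (Fin d) → ℂ)
    (hKmeas : Measurable fun z : EuclideanSpace ℝ (Fin d) × EuclideanSpace ℝ (Fin d) => K z.1 z.2)
    (c1 C1 : ℝ) (hc1 : 0 < c1)
    (hpos : UnifQuantPositivityBalls d K c1 C1)
    (p q : ℝ) :
    ∃ C : ℝ, 0 < C ∧
      ∀ (b : EuclideanSpace ℝ (Fin d) → ℝ) (Θ : ℝ),
        Measurable b → LocallyIntegrable (fun x => |b x| ^ k) volume → 0 ≤ Θ →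
        -- off-support absolute integrability
        (∀ (y0 x0 : EuclideanSpace ℝ (Fin d)) (r : ℝ), 0 < r → 3 * r ≤ dist y0 x0 →
          IntegrableOn
            (fun z : EuclideanSpace ℝ (Fin d) × EuclideanSpace ℝ (Fin d) =>
              |b z.1 - b z.2| ^ k * ‖K z.1 z.2‖)
            ((ball x0 r) ×ˢ (ball y0 r)) volume) →
        -- weak form of the L^p → L^q bound for T_b^k
        (∀ (y0 x0 : EuclideanSpace ℝ (Fin d)) (r : ℝ), 0 < r → 3 * r ≤ dist y0 x0 →
          ∀ (f g : EuclideanSpace ℝ (Fin d) → ℂ) (Mf Mg : ℝ),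
            Measurable f → Measurable g →
            (∀ x ∉ ball y0 r, f x = 0) → (∀ x ∉ ball x0 r, g x = 0) →
            (∀ x, ‖f x‖ ≤ Mf) → (∀ x, ‖g x‖ ≤ Mg) →
            ‖∫ x in ball x0 r, ∫ y in ball y0 r,
                (((b x - b y) ^ k : ℝ) : ℂ) * K x y * f y * g x‖
              ≤ Θ * (Mf * (volume (ball y0 r)).toReal ^ (1 / p))
                  * (Mg * (volume (ball x0 r)).toReal ^ (1 - 1 / q))) →
        -- conclusions, with α := (d/k)(1/p − 1/q)
        ((((d : ℝ) / k) * (1 / p - 1 / q) = 0 →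
            ∀ (z : EuclideanSpace ℝ (Fin d)) (ρ : ℝ), 0 < ρ →
              (⨍ x in ball z ρ, |b x - ⨍ y in ball z ρ, b y|) ^ k ≤ C * Θ) ∧
          (0 < ((d : ℝ) / k) * (1 / p - 1 / q) → ((d : ℝ) / k) * (1 / p - 1 / q) ≤ 1 →
            ∃ b' : EuclideanSpace ℝ (Fin d) → ℝ,
              (∀ᵐ x ∂(volume : Measure (EuclideanSpace ℝ (Fin d))), b x = b' x) ∧
              ∀ x y, |b' x - b' y| ^ k
                ≤ C * Θ * dist x y ^ ((((d : ℝ) / k) * (1 / p - 1 / q)) * k)) ∧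
          (1 < ((d : ℝ) / k) * (1 / p - 1 / q) →
            ∃ c0 : ℝ, ∀ᵐ x ∂(volume : Measure (EuclideanSpace ℝ (Fin d))), b x = c0)) := by
  set α := (d : ℝ) / k * (1 / p - 1 / q)
  set v := volume.real (ball (0 : EuclideanSpace ℝ (Fin d)) 1)
  have hv : 0 < v := ENNReal.toReal_pos (measure_ball_pos volume _ one_pos).ne'
    measure_ball_lt_top.ne
  set Cst := max (2 ^ k) (campanatoConst d α ^ k)
  refine ⟨4 / c1 * v ^ (1 / p - 1 / q) * Cst, mul_pos (mul_pos (by positivity)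
    (Real.rpow_pos_of_pos hv _)) (lt_max_of_lt_left (by positivity)), ?_⟩
  intro b Θ hb hbk hΘ habs hweak
  set A := (4 / c1 * Θ * v ^ (1 / p - 1 / q)) ^ (k⁻¹ : ℝ)
  have hosc : HasMeanOscillationLE volume b A α :=
    OffSupportBound.hasMeanOscillationLE hweak habs hKmeas hb hbk hk hΘ hc1 hpos
  have hCΘ : 4 / c1 * v ^ (1 / p - 1 / q) * Cst * Θ = Cst * A ^ k := by
    rw [Real.rpow_inv_natCast_pow (by positivity) (by omega)]
    ring
  have hbloc : LocallyIntegrable b volume := hbk.of_abs_pow hk hb.aestronglyMeasurable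
  refine ⟨fun hα z ρ hρ => ?_, fun hα _ => ?_, fun hα => ?_⟩
  · have h := hosc.setAverage_abs_sub_setAverage_le hbloc z hρ
    rw [hα, Real.rpow_zero, mul_one] at h
    calc _ ≤ (2 * A) ^ k := pow_le_pow_left₀ (setAverage_nonneg fun x => abs_nonneg _) h k
      _ ≤ Cst * A ^ k := by rw [mul_pow]; gcongr; exact le_max_left _ _
      _ = _ := hCΘ.symm
  · obtain ⟨b', hb', hhol⟩ := hosc.exists_ae_eq_holder hα hbloc
    refine ⟨b', hb', fun x y => ?_⟩
    calc |b' x - b' y| ^ k ≤ (campanatoConst d α * A * dist x y ^ α) ^ k := by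
          simpa only [finrank_euclideanSpace_fin] using
            pow_le_pow_left₀ (abs_nonneg _) (hhol x y) k
      _ = campanatoConst d α ^ k * A ^ k * dist x y ^ (α * k) := by
          rw [mul_pow, mul_pow, ← Real.rpow_mul_natCast dist_nonneg]
      _ ≤ Cst * A ^ k * dist x y ^ (α * k) := by gcongr; exact le_max_right _ _
      _ = _ := by rw [hCΘ]
  · obtain ⟨b', hb', hhol⟩ := hosc.exists_ae_eq_holder (by linarith) hbloc
    exact ⟨b' 0, hb'.mono fun x hx => hx.trans (eq_of_abs_sub_le_mul_dist_rpow hα hhol x 0)⟩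

/-- Necessary conditions for the weak off-support `L^p → L^q` bound of the
iterated commutator `T_b^k`, `p ≤ q`, with `α := (d/k)(1/p − 1/q)`. -/
theorem statement17
    (d : ℕ) (hd : 1 ≤ d) (k : ℕ) (hk : 1 ≤ k)
    (K : EuclideanSpace ℝ (Fin d) → EuclideanSpace ℝ (Fin d) → ℂ)
    (hKmeas : Measurable fun z : EuclideanSpace ℝ (Fin d) × EuclideanSpace ℝ (Fin d) => K z.1 z.2)
    (c1 C1 : ℝ) (hc1 : 0 < c1) (hC1 : 3 ≤ C1)
    (hpos : UnifQuantPositivityBalls d K c1 C1)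
    (p q : ℝ) (hp : 1 < p) (hpq : p ≤ q) :
    ∃ C : ℝ, 0 < C ∧
      ∀ (b : EuclideanSpace ℝ (Fin d) → ℝ) (Θ : ℝ),
        Measurable b → LocallyIntegrable (fun x => |b x| ^ k) volume → 0 ≤ Θ →
        -- off-support absolute integrability
        (∀ (y0 x0 : EuclideanSpace ℝ (Fin d)) (r : ℝ), 0 < r → 3 * r ≤ dist y0 x0 →
          IntegrableOn
            (fun z : EuclideanSpace ℝ (Fin d) × EuclideanSpace ℝ (Fin d) =>
              |b z.1 - b z.2| ^ k * ‖K z.1 z.2‖)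
            ((ball x0 r) ×ˢ (ball y0 r)) volume) →
        -- weak form of the L^p → L^q bound for T_b^k
        (∀ (y0 x0 : EuclideanSpace ℝ (Fin d)) (r : ℝ), 0 < r → 3 * r ≤ dist y0 x0 →
          ∀ (f g : EuclideanSpace ℝ (Fin d) → ℂ) (Mf Mg : ℝ),
            Measurable f → Measurable g →
            (∀ x ∉ ball y0 r, f x = 0) → (∀ x ∉ ball x0 r, g x = 0) →
            (∀ x, ‖f x‖ ≤ Mf) → (∀ x, ‖g x‖ ≤ Mg) →
            ‖∫ x in ball x0 r, ∫ y in ball y0 r,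
                (((b x - b y) ^ k : ℝ) : ℂ) * K x y * f y * g x‖
              ≤ Θ * (Mf * (volume (ball y0 r)).toReal ^ (1 / p))
                  * (Mg * (volume (ball x0 r)).toReal ^ (1 - 1 / q))) →
        -- conclusions, with α := (d/k)(1/p − 1/q)
        ((((d : ℝ) / k) * (1 / p - 1 / q) = 0 →
            ∀ (z : EuclideanSpace ℝ (Fin d)) (ρ : ℝ), 0 < ρ →
              (⨍ x in ball z ρ, |b x - ⨍ y in ball z ρ, b y|) ^ k ≤ C * Θ) ∧
          (0 < ((d : ℝ) / k) * (1 / p - 1 / q) → ((d : ℝ) / k) * (1 / p - 1 / q) ≤ 1 →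
            ∃ b' : EuclideanSpace ℝ (Fin d) → ℝ,
              (∀ᵐ x ∂(volume : Measure (EuclideanSpace ℝ (Fin d))), b x = b' x) ∧
              ∀ x y, |b' x - b' y| ^ k
                ≤ C * Θ * dist x y ^ ((((d : ℝ) / k) * (1 / p - 1 / q)) * k)) ∧
          (1 < ((d : ℝ) / k) * (1 / p - 1 / q) →
            ∃ c0 : ℝ, ∀ᵐ x ∂(volume : Measure (EuclideanSpace ℝ (Fin d))), b x = c0)) :=
  statement17_general d k hk K hKmeas c1 C1 hc1 hpos p q
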